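/- Let S be an epsilon-strongly G-graded ring and N a normal subgroup of G. For each coset C ∈ G/N, the set E_C = join-closure of {ε_g : g ∈ C} is a set of local units for the ring S_C S_{C^{-1}}. In particular, the induced G/N-grading of S is essentially epsilon-strong. -/

import Mathlib

/-!
Every `ε_g` with `g ∈ C` lies in `S_e`, is idempotent and central in `S_e`; these properties
survive the join `x ∨ y = x + y - x y`, so `E_C` consists of commuting idempotents, and it lies
in `S_C S_{C⁻¹}` because `S_C S_{C⁻¹}` is stable under left multiplication by `S_e`.
A homogeneous `a ∈ S_g` has the left unit `ε_g` and a homogeneous `b ∈ S_{g⁻¹}` the right unit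
`ε_g`; since `f₁ ∨ f₂` is a left (right) unit of whatever `f₁` or `f₂` is, joins produce common
units for sums and for products `a b`, hence for all of `S_C S_{C⁻¹}`. Finally `S_C = E_C S_C`
gives `S_C S_{C⁻¹} S_C = S_C`.
-/

/-- The additive subgroup generated by all products `u * v` with `u ∈ U`, `v ∈ V`. -/
def mulSub {S : Type*} [NonUnitalRing S] (U V : AddSubgroup S) : AddSubgroup S :=
  AddSubgroup.closure (Set.image2 (· * ·) (U : Set S) (V : Set S))

/-- `comp` is a `G`-grading of the ring `S`: the components form an internal direct sum
and `S_g S_h ⊆ S_{gh}`. -/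
def IsGrading {G : Type*} [Group G] [DecidableEq G] {S : Type*} [NonUnitalRing S]
    (comp : G → AddSubgroup S) : Prop :=
  DirectSum.IsInternal comp ∧
    ∀ g h : G, ∀ a ∈ comp g, ∀ b ∈ comp h, a * b ∈ comp (g * h)

/-- The grading `comp` is epsilon-strong: for every `g` there are `ε_g ∈ S_g S_{g⁻¹}` and
`ε'_g ∈ S_{g⁻¹} S_g` with `ε_g s = s = s ε'_g` for all `s ∈ S_g`. -/
def EpsilonStrong {G : Type*} [Group G] {S : Type*} [NonUnitalRing S]
    (comp : G → AddSubgroup S) : Prop :=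
  ∀ g : G, ∃ ε ∈ mulSub (comp g) (comp g⁻¹), ∃ ε' ∈ mulSub (comp g⁻¹) (comp g),
    ∀ s ∈ comp g, ε * s = s ∧ s * ε' = s

/-- The component `S_C = ⊕_{g ∈ C} S_g` of the induced `G/N`-grading. -/
def indComp {G : Type*} [Group G] {S : Type*} [NonUnitalRing S]
    (comp : G → AddSubgroup S) (N : Subgroup G) (C : G ⧸ N) : AddSubgroup S :=
  ⨆ g : {g : G // (g : G ⧸ N) = C}, comp g.1

/-- The closure of a set `A` under the join operation `a ∨ b = a + b - a*b`. -/
inductive JoinClosure {S : Type*} [NonUnitalRing S] (A : Set S) : S → Prop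
  | base {x : S} : x ∈ A → JoinClosure A x
  | join {x y : S} : JoinClosure A x → JoinClosure A y → JoinClosure A (x + y - x * y)

/-- `E` is a set of local units for (the ring with underlying additive group) `T`:
a join-closed set of commuting idempotents contained in `T` such that every element of `T`
has a local unit in `E`. -/
def IsLocalUnitsFor {S : Type*} [NonUnitalRing S] (T : AddSubgroup S) (E : Set S) : Prop :=
  (∀ e ∈ E, e ∈ T) ∧ (∀ e ∈ E, e * e = e) ∧ (∀ e ∈ E, ∀ f ∈ E, e * f = f * e) ∧
  (∀ e ∈ E, ∀ f ∈ E, e + f - e * f ∈ E) ∧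
  (∀ r ∈ T, ∃ f ∈ E, f * r = r ∧ r * f = r)

section Join

variable {S : Type*} [NonUnitalRing S]

theorem join_mul_self {x y : S} (hx : x * x = x) (hy : y * y = y) (hxy : x * y = y * x) :
    (x + y - x * y) * (x + y - x * y) = x + y - x * y := by
  have hxxy : x * (x * y) = x * y := by rw [← mul_assoc, hx]
  have hxyy : x * y * y = x * y := by rw [mul_assoc, hy]
  have hxyx : x * y * x = x * y := by rw [mul_assoc, ← hxy, ← mul_assoc, hx]
  have hxyxy : x * y * (x * y) = x * y := by rw [← mul_assoc, hxyx, hxyy]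
  have hyx : y * x = x * y := hxy.symm
  have hyxy : y * (x * y) = x * y := by rw [← mul_assoc, hyx, hxyy]
  rw [sub_mul, add_mul, mul_sub, mul_add, mul_sub, mul_add, mul_sub, mul_add,
    hx, hy, hxxy, hyx, hyxy, hxyx, hxyy, hxyxy]
  abel

theorem join_mul_comm {x y s : S} (hx : x * s = s * x) (hy : y * s = s * y) :
    (x + y - x * y) * s = s * (x + y - x * y) := by
  have hxy : x * y * s = s * (x * y) := by
    rw [mul_assoc, hy, ← mul_assoc, hx, mul_assoc]
  rw [sub_mul, add_mul, hx, hy, hxy, mul_sub, mul_add]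

theorem join_mul_eq_self {f₁ f₂ a : S} (hc : f₁ * f₂ = f₂ * f₁)
    (h : f₁ * a = a ∨ f₂ * a = a) : (f₁ + f₂ - f₁ * f₂) * a = a := by
  rw [sub_mul, add_mul]
  rcases h with h | h
  · rw [hc, mul_assoc, h]; abel
  · rw [mul_assoc, h]; abel

theorem mul_join_eq_self {f₁ f₂ a : S} (hc : f₁ * f₂ = f₂ * f₁)
    (h : a * f₁ = a ∨ a * f₂ = a) : a * (f₁ + f₂ - f₁ * f₂) = a := by
  rw [mul_sub, mul_add]
  rcases h with h | h
  · rw [← mul_assoc, h]; abel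
  · rw [hc, ← mul_assoc, h]; abel

end Join

namespace JoinClosure

variable {S : Type*} [NonUnitalRing S] {A : Set S}

theorem central_idempotent {R : AddSubgroup S} (hR : ∀ a ∈ R, ∀ b ∈ R, a * b ∈ R)
    (hA : ∀ a ∈ A, a ∈ R ∧ a * a = a ∧ ∀ s ∈ R, a * s = s * a) {x : S}
    (hx : JoinClosure A x) : x ∈ R ∧ x * x = x ∧ ∀ s ∈ R, x * s = s * x := by
  induction hx with
  | base h => exact hA _ h
  | join _ _ ihx ihy =>
    obtain ⟨hxR, hxx, hxc⟩ := ihx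
    obtain ⟨hyR, hyy, hyc⟩ := ihy
    exact ⟨sub_mem (add_mem hxR hyR) (hR _ hxR _ hyR), join_mul_self hxx hyy (hxc _ hyR),
      fun s hs => join_mul_comm (hxc s hs) (hyc s hs)⟩

theorem mem {T : AddSubgroup S} (hA : A ⊆ T) (hT : ∀ x, JoinClosure A x → ∀ t ∈ T, x * t ∈ T)
    {x : S} (hx : JoinClosure A x) : x ∈ T := by
  induction hx with
  | base h => exact hA h
  | join hx _ ihx ihy => exact sub_mem (add_mem ihx ihy) (hT _ hx _ ihy)

end JoinClosure

section LocalUnits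

variable {S : Type*} [NonUnitalRing S] {E : Set S}

theorem exists_left_unit_add (hcomm : ∀ e ∈ E, ∀ f ∈ E, e * f = f * e)
    (hjoin : ∀ e ∈ E, ∀ f ∈ E, e + f - e * f ∈ E) {a b : S}
    (ha : ∃ f ∈ E, f * a = a) (hb : ∃ f ∈ E, f * b = b) : ∃ f ∈ E, f * (a + b) = a + b := by
  obtain ⟨f₁, hf₁, h₁⟩ := ha
  obtain ⟨f₂, hf₂, h₂⟩ := hb
  have hc := hcomm _ hf₁ _ hf₂
  exact ⟨_, hjoin _ hf₁ _ hf₂,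
    by rw [mul_add, join_mul_eq_self hc (.inl h₁), join_mul_eq_self hc (.inr h₂)]⟩

theorem exists_right_unit_add (hcomm : ∀ e ∈ E, ∀ f ∈ E, e * f = f * e)
    (hjoin : ∀ e ∈ E, ∀ f ∈ E, e + f - e * f ∈ E) {a b : S}
    (ha : ∃ f ∈ E, a * f = a) (hb : ∃ f ∈ E, b * f = b) : ∃ f ∈ E, (a + b) * f = a + b := by
  obtain ⟨f₁, hf₁, h₁⟩ := ha
  obtain ⟨f₂, hf₂, h₂⟩ := hb
  have hc := hcomm _ hf₁ _ hf₂
  exact ⟨_, hjoin _ hf₁ _ hf₂,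
    by rw [add_mul, mul_join_eq_self hc (.inl h₁), mul_join_eq_self hc (.inr h₂)]⟩

theorem exists_unit_add (hcomm : ∀ e ∈ E, ∀ f ∈ E, e * f = f * e)
    (hjoin : ∀ e ∈ E, ∀ f ∈ E, e + f - e * f ∈ E) {a b : S}
    (ha : ∃ f ∈ E, f * a = a ∧ a * f = a) (hb : ∃ f ∈ E, f * b = b ∧ b * f = b) :
    ∃ f ∈ E, f * (a + b) = a + b ∧ (a + b) * f = a + b := by
  obtain ⟨f₁, hf₁, h₁, h₁'⟩ := ha
  obtain ⟨f₂, hf₂, h₂, h₂'⟩ := hb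
  have hc := hcomm _ hf₁ _ hf₂
  exact ⟨_, hjoin _ hf₁ _ hf₂,
    by rw [mul_add, join_mul_eq_self hc (.inl h₁), join_mul_eq_self hc (.inr h₂)],
    by rw [add_mul, mul_join_eq_self hc (.inl h₁'), mul_join_eq_self hc (.inr h₂')]⟩

theorem exists_unit_mul (hcomm : ∀ e ∈ E, ∀ f ∈ E, e * f = f * e)
    (hjoin : ∀ e ∈ E, ∀ f ∈ E, e + f - e * f ∈ E) {a b : S}
    (ha : ∃ f ∈ E, f * a = a) (hb : ∃ f ∈ E, b * f = b) :
    ∃ f ∈ E, f * (a * b) = a * b ∧ a * b * f = a * b := by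
  obtain ⟨f₁, hf₁, h₁⟩ := ha
  obtain ⟨f₂, hf₂, h₂⟩ := hb
  have hc := hcomm _ hf₁ _ hf₂
  exact ⟨_, hjoin _ hf₁ _ hf₂, by rw [← mul_assoc, join_mul_eq_self hc (.inl h₁)],
    by rw [mul_assoc, mul_join_eq_self hc (.inr h₂)]⟩

end LocalUnits

section MulSub

variable {S : Type*} [NonUnitalRing S] {U U' V V' W : AddSubgroup S}

theorem mul_mem_mulSub {a b : S} (ha : a ∈ U) (hb : b ∈ V) : a * b ∈ mulSub U V :=
  AddSubgroup.subset_closure ⟨a, ha, b, hb, rfl⟩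

theorem mulSub_le (h : ∀ a ∈ U, ∀ b ∈ V, a * b ∈ W) : mulSub U V ≤ W :=
  (AddSubgroup.closure_le W).mpr fun _ ⟨a, ha, b, hb, hab⟩ => hab ▸ h a ha b hb

theorem mul_mem_mulSub_of_left {s x : S} (hs : ∀ a ∈ U, s * a ∈ U') (hx : x ∈ mulSub U V) :
    s * x ∈ mulSub U' V :=
  mulSub_le (W := (mulSub U' V).comap (AddMonoidHom.mulLeft s))
    (fun a ha b hb => by simpa [mul_assoc] using mul_mem_mulSub (hs a ha) hb) hx

theorem mul_mem_mulSub_of_right {s x : S} (hs : ∀ b ∈ V, b * s ∈ V') (hx : x ∈ mulSub U V) :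
    x * s ∈ mulSub U V' :=
  mulSub_le (W := (mulSub U V').comap (AddMonoidHom.mulRight s))
    (fun a ha b hb => by simpa [mul_assoc] using mul_mem_mulSub ha (hs b hb)) hx

theorem mul_eq_self_of_mem_mulSub {e x : S} (he : ∀ a ∈ U, e * a = a) (hx : x ∈ mulSub U V) :
    e * x = x :=
  mulSub_le (W := (AddMonoidHom.mulLeft e).eqLocus (AddMonoidHom.id S))
    (fun a ha b hb => show e * (a * b) = a * b by rw [← mul_assoc, he a ha]) hx

theorem mulSub_mul_eq_self {e x : S} (he : ∀ b ∈ V, b * e = b) (hx : x ∈ mulSub U V) :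
    x * e = x :=
  mulSub_le (W := (AddMonoidHom.mulRight e).eqLocus (AddMonoidHom.id S))
    (fun a ha b hb => show a * b * e = a * b by rw [mul_assoc, he b hb]) hx

theorem mulSub_mono (hU : U ≤ U') (hV : V ≤ V') : mulSub U V ≤ mulSub U' V' :=
  mulSub_le fun _ ha _ hb => mul_mem_mulSub (hU ha) (hV hb)

end MulSub

section Graded

variable {G S : Type*} [Group G] [NonUnitalRing S]

def IsGradedMul (comp : G → AddSubgroup S) : Prop :=
  ∀ g h : G, ∀ a ∈ comp g, ∀ b ∈ comp h, a * b ∈ comp (g * h)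

def IsEpsilonFamily (comp : G → AddSubgroup S) (ε : G → S) : Prop :=
  ∀ g : G, ε g ∈ mulSub (comp g) (comp g⁻¹) ∧ ∀ s ∈ comp g, ε g * s = s ∧ s * ε g⁻¹ = s

/-- The paper's `E_C`. -/
def epsilonUnits (ε : G → S) (N : Subgroup G) (C : G ⧸ N) : Set S :=
  {x | JoinClosure {y | ∃ g : G, (g : G ⧸ N) = C ∧ y = ε g} x}

variable {comp : G → AddSubgroup S} {ε : G → S}

theorem IsGradedMul.mulSub_le (hmul : IsGradedMul comp) (g h : G) :
    mulSub (comp g) (comp h) ≤ comp (g * h) :=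
  _root_.mulSub_le (hmul g h)

namespace IsEpsilonFamily

theorem mul_eq_self (hε : IsEpsilonFamily comp ε) {g : G} {x : S}
    (hx : x ∈ mulSub (comp g) (comp g⁻¹)) : ε g * x = x :=
  mul_eq_self_of_mem_mulSub (fun a ha => ((hε g).2 a ha).1) hx

theorem mul_epsilon_eq_self (hε : IsEpsilonFamily comp ε) {g : G} {s : S}
    (hs : s ∈ comp g⁻¹) : s * ε g = s := by
  simpa using ((hε g⁻¹).2 s hs).2

theorem mulSub_mul_eq_self (hε : IsEpsilonFamily comp ε) {g : G} {x : S}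
    (hx : x ∈ mulSub (comp g) (comp g⁻¹)) : x * ε g = x :=
  _root_.mulSub_mul_eq_self (fun _ hb => hε.mul_epsilon_eq_self hb) hx

theorem mul_self (hε : IsEpsilonFamily comp ε) (g : G) : ε g * ε g = ε g :=
  hε.mul_eq_self (hε g).1

theorem mem_comp_one (hmul : IsGradedMul comp) (hε : IsEpsilonFamily comp ε) (g : G) :
    ε g ∈ comp 1 := by
  simpa using hmul.mulSub_le g g⁻¹ (hε g).1

theorem commute_of_mem_comp_one (hmul : IsGradedMul comp) (hε : IsEpsilonFamily comp ε)
    {g : G} {s : S} (hs : s ∈ comp 1) : ε g * s = s * ε g := by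
  have hεs : ε g * s ∈ mulSub (comp g) (comp g⁻¹) :=
    mul_mem_mulSub_of_right (fun b hb => by simpa using hmul _ _ b hb s hs) (hε g).1
  have hsε : s * ε g ∈ mulSub (comp g) (comp g⁻¹) :=
    mul_mem_mulSub_of_left (fun a ha => by simpa using hmul _ _ s hs a ha) (hε g).1
  calc ε g * s = ε g * s * ε g := (hε.mulSub_mul_eq_self hεs).symm
    _ = ε g * (s * ε g) := mul_assoc _ _ _
    _ = s * ε g := hε.mul_eq_self hsε

end IsEpsilonFamily

variable {N : Subgroup G}

theorem comp_le_indComp {g : G} {C : G ⧸ N} (h : (g : G ⧸ N) = C) :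
    comp g ≤ indComp comp N C :=
  le_iSup (fun i : {g : G // (g : G ⧸ N) = C} => comp i.1) ⟨g, h⟩

theorem indComp_induction {C : G ⧸ N} {P : S → Prop} {x : S} (hx : x ∈ indComp comp N C)
    (mem : ∀ g : G, (g : G ⧸ N) = C → ∀ y ∈ comp g, P y)
    (zero : P 0) (add : ∀ x y, P x → P y → P (x + y)) : P x :=
  AddSubgroup.iSup_induction (C := P) _ hx (fun i y hy => mem i.1 i.2 y hy) zero add

theorem IsGradedMul.mulSub_indComp_le (hmul : IsGradedMul comp) [N.Normal] (C D : G ⧸ N) :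
    mulSub (indComp comp N C) (indComp comp N D) ≤ indComp comp N (C * D) := by
  refine _root_.mulSub_le fun a ha b hb => ?_
  refine indComp_induction (P := fun a => a * b ∈ _) ha (fun g hg a ha => ?_) (by simp)
    (fun x y hx hy => by simpa [add_mul] using add_mem hx hy)
  refine indComp_induction (P := fun b => a * b ∈ _) hb (fun h hh b hb => ?_) (by simp)
    (fun x y hx hy => by simpa [mul_add] using add_mem hx hy)
  exact comp_le_indComp (by rw [← hg, ← hh]; rfl) (hmul g h a ha b hb)

end Graded

section EpsilonUnits

variable {G S : Type*} [Group G] [NonUnitalRing S] {comp : G → AddSubgroup S} {ε : G → S}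
  {N : Subgroup G} {C : G ⧸ N}

theorem epsilon_mem_epsilonUnits {g : G} (hg : (g : G ⧸ N) = C) : ε g ∈ epsilonUnits ε N C :=
  .base ⟨g, hg, rfl⟩

theorem epsilonUnits_nonempty : (epsilonUnits ε N C).Nonempty :=
  let ⟨g, hg⟩ := QuotientGroup.mk_surjective C
  ⟨ε g, epsilon_mem_epsilonUnits hg⟩

theorem join_mem_epsilonUnits {e f : S} (he : e ∈ epsilonUnits ε N C)
    (hf : f ∈ epsilonUnits ε N C) : e + f - e * f ∈ epsilonUnits ε N C :=
  .join he hf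

theorem central_idempotent_of_mem_epsilonUnits (hmul : IsGradedMul comp)
    (hε : IsEpsilonFamily comp ε) {e : S} (he : e ∈ epsilonUnits ε N C) :
    e ∈ comp 1 ∧ e * e = e ∧ ∀ s ∈ comp 1, e * s = s * e := by
  refine JoinClosure.central_idempotent (fun a ha b hb => by simpa using hmul 1 1 a ha b hb)
    ?_ he
  rintro _ ⟨g, -, rfl⟩
  exact ⟨hε.mem_comp_one hmul g, hε.mul_self g, fun _ hs => hε.commute_of_mem_comp_one hmul hs⟩

theorem epsilonUnits_commute (hmul : IsGradedMul comp) (hε : IsEpsilonFamily comp ε)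
    {e f : S} (he : e ∈ epsilonUnits ε N C) (hf : f ∈ epsilonUnits ε N C) : e * f = f * e :=
  (central_idempotent_of_mem_epsilonUnits hmul hε he).2.2 f
    (central_idempotent_of_mem_epsilonUnits hmul hε hf).1

theorem mem_mulSub_of_mem_epsilonUnits (hmul : IsGradedMul comp) (hε : IsEpsilonFamily comp ε)
    [N.Normal] {e : S} (he : e ∈ epsilonUnits ε N C) :
    e ∈ mulSub (indComp comp N C) (indComp comp N C⁻¹) := by
  refine JoinClosure.mem ?_ (fun x hx t ht => ?_) he
  · rintro _ ⟨g, hg, rfl⟩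
    exact mulSub_mono (comp_le_indComp hg) (comp_le_indComp (by rw [← hg]; rfl)) (hε g).1
  · have hx1 : x ∈ indComp comp N 1 :=
      comp_le_indComp rfl (central_idempotent_of_mem_epsilonUnits hmul hε hx).1
    exact mul_mem_mulSub_of_left
      (fun a ha => by simpa using hmul.mulSub_indComp_le 1 C (mul_mem_mulSub hx1 ha)) ht

theorem exists_left_unit_of_mem_indComp (hmul : IsGradedMul comp) (hε : IsEpsilonFamily comp ε)
    {a : S} (ha : a ∈ indComp comp N C) : ∃ f ∈ epsilonUnits ε N C, f * a = a := by
  refine indComp_induction (P := fun a => ∃ f ∈ epsilonUnits ε N C, f * a = a) ha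
    (fun g hg y hy => ⟨ε g, epsilon_mem_epsilonUnits hg, ((hε g).2 y hy).1⟩) ?_
    (fun _ _ => exists_left_unit_add (fun _ he _ hf => epsilonUnits_commute hmul hε he hf)
      (fun _ he _ hf => join_mem_epsilonUnits he hf))
  obtain ⟨e, he⟩ := epsilonUnits_nonempty (ε := ε) (C := C)
  exact ⟨e, he, mul_zero e⟩

theorem exists_right_unit_of_mem_indComp (hmul : IsGradedMul comp) (hε : IsEpsilonFamily comp ε)
    [N.Normal] {b : S} (hb : b ∈ indComp comp N C⁻¹) : ∃ f ∈ epsilonUnits ε N C, b * f = b := by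
  refine indComp_induction (P := fun b => ∃ f ∈ epsilonUnits ε N C, b * f = b) hb
    (fun h hh y hy => ⟨ε h⁻¹, epsilon_mem_epsilonUnits (by rw [QuotientGroup.mk_inv, hh, inv_inv]),
      hε.mul_epsilon_eq_self (by rwa [inv_inv])⟩) ?_
    (fun _ _ => exists_right_unit_add (fun _ he _ hf => epsilonUnits_commute hmul hε he hf)
      (fun _ he _ hf => join_mem_epsilonUnits he hf))
  obtain ⟨e, he⟩ := epsilonUnits_nonempty (ε := ε) (C := C)
  exact ⟨e, he, zero_mul e⟩

theorem exists_unit_of_mem_mulSub (hmul : IsGradedMul comp) (hε : IsEpsilonFamily comp ε)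
    [N.Normal] {r : S} (hr : r ∈ mulSub (indComp comp N C) (indComp comp N C⁻¹)) :
    ∃ f ∈ epsilonUnits ε N C, f * r = r ∧ r * f = r := by
  have hcomm : ∀ e ∈ epsilonUnits ε N C, ∀ f ∈ epsilonUnits ε N C, e * f = f * e :=
    fun _ he _ hf => epsilonUnits_commute hmul hε he hf
  have hjoin : ∀ e ∈ epsilonUnits ε N C, ∀ f ∈ epsilonUnits ε N C,
      e + f - e * f ∈ epsilonUnits ε N C :=
    fun _ he _ hf => join_mem_epsilonUnits he hf
  refine AddSubgroup.closure_induction (fun r _ => ?_) ?_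
    (fun _ _ _ _ => exists_unit_add hcomm hjoin) (fun _ _ ⟨f, hf, hl, hr⟩ => ?_) hr
  · obtain ⟨a, ha, b, hb, rfl⟩ := ‹r ∈ _›
    exact exists_unit_mul hcomm hjoin (exists_left_unit_of_mem_indComp hmul hε ha)
      (exists_right_unit_of_mem_indComp hmul hε hb)
  · obtain ⟨e, he⟩ := epsilonUnits_nonempty (ε := ε) (C := C)
    exact ⟨e, he, mul_zero e, zero_mul e⟩
  · exact ⟨f, hf, by rw [mul_neg, hl], by rw [neg_mul, hr]⟩

theorem isLocalUnitsFor_epsilonUnits (hmul : IsGradedMul comp) (hε : IsEpsilonFamily comp ε)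
    [N.Normal] (C : G ⧸ N) :
    IsLocalUnitsFor (mulSub (indComp comp N C) (indComp comp N C⁻¹)) (epsilonUnits ε N C) :=
  ⟨fun _ he => mem_mulSub_of_mem_epsilonUnits hmul hε he,
    fun _ he => (central_idempotent_of_mem_epsilonUnits hmul hε he).2.1,
    fun _ he _ hf => epsilonUnits_commute hmul hε he hf,
    fun _ he _ hf => join_mem_epsilonUnits he hf,
    fun _ hr => exists_unit_of_mem_mulSub hmul hε hr⟩

theorem mulSub_mulSub_indComp_eq (hmul : IsGradedMul comp) (hε : IsEpsilonFamily comp ε)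
    [N.Normal] (C : G ⧸ N) :
    mulSub (mulSub (indComp comp N C) (indComp comp N C⁻¹)) (indComp comp N C) =
      indComp comp N C := by
  refine le_antisymm ?_ fun a ha => ?_
  · calc mulSub (mulSub (indComp comp N C) (indComp comp N C⁻¹)) (indComp comp N C)
        ≤ mulSub (indComp comp N (C * C⁻¹)) (indComp comp N C) :=
          mulSub_mono (hmul.mulSub_indComp_le C C⁻¹) le_rfl
      _ ≤ indComp comp N (C * C⁻¹ * C) := hmul.mulSub_indComp_le _ _
      _ = indComp comp N C := by rw [mul_inv_cancel, one_mul]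
  · obtain ⟨f, hf, hfa⟩ := exists_left_unit_of_mem_indComp hmul hε ha
    exact hfa ▸ mul_mem_mulSub (mem_mulSub_of_mem_epsilonUnits hmul hε hf) ha

end EpsilonUnits

/-- Let `S` be epsilon-strongly `G`-graded with epsilons `ε_g`, and `N ◃ G`. Then for each
coset `C ∈ G/N`, the join-closure `E_C` of `{ε_g : g ∈ C}` is a set of local units for
`S_C S_{C⁻¹}`; in particular the induced `G/N`-grading is essentially epsilon-strong
(symmetric with each `S_C S_{C⁻¹}` having a set of local units). -/
theorem stmt14 {G : Type*} [Group G] [DecidableEq G] {S : Type*} [NonUnitalRing S]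
    (comp : G → AddSubgroup S) (hgr : IsGrading comp) (ε : G → S)
    (hε : ∀ g : G, ε g ∈ mulSub (comp g) (comp g⁻¹) ∧
      ∀ s ∈ comp g, ε g * s = s ∧ s * ε g⁻¹ = s)
    (N : Subgroup G) [N.Normal] :
    ∀ C : G ⧸ N,
      IsLocalUnitsFor (mulSub (indComp comp N C) (indComp comp N C⁻¹))
        {x | JoinClosure {y | ∃ g : G, (g : G ⧸ N) = C ∧ y = ε g} x} ∧
      mulSub (mulSub (indComp comp N C) (indComp comp N C⁻¹)) (indComp comp N C) =
        indComp comp N C :=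
  fun C => ⟨isLocalUnitsFor_epsilonUnits hgr.2 hε C, mulSub_mulSub_indComp_eq hgr.2 hε C⟩
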